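/- Let a, b, c ∈ ℂ∖{0} and suppose that the binary quintic Q = a·z1^5 + b·z2^5 + c·(z1+z2)^5 is square-free. Then Q is linearly equivalent to a binary quintic of the form a5'·z1^5 + 5·a4'·z1^4·z2 + 10·a3'·z1^3·z2^2 + z2^5 for some a3', a4', a5' ∈ ℂ. -/
import Mathlib


open MvPolynomial

/-- The polynomial obtained from `Q(z)` by the linear change of variables `z ↦ C z`;
its value at `w` is `Q (C w)`. -/
noncomputable def substMat (M : Matrix (Fin 2) (Fin 2) ℂ) (Q : MvPolynomial (Fin 2) ℂ) :
    MvPolynomial (Fin 2) ℂ :=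
  aeval (fun i => MvPolynomial.C (M i 0) * X 0 + MvPolynomial.C (M i 1) * X 1) Q

/-- Two binary forms are linearly equivalent if one is obtained from the other by an
invertible linear change of the variables. -/
def LinEquiv (Q R : MvPolynomial (Fin 2) ℂ) : Prop :=
  ∃ M : Matrix (Fin 2) (Fin 2) ℂ, IsUnit M.det ∧ substMat M Q = R


open MvPolynomial

lemma not_unit_lin (t : ℂ) :
    ¬ IsUnit (X 0 - MvPolynomial.C t * X 1 : MvPolynomial (Fin 2) ℂ) := by
  intro h
  have h2 := h.map (MvPolynomial.eval (![t, 1] : Fin 2 → ℂ))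
  simp at h2

theorem quintic_form2_reduction (a b c : ℂ) (ha : a ≠ 0) (hb : b ≠ 0) (hc : c ≠ 0)
    (hsf : Squarefree (MvPolynomial.C a * X 0 ^ 5 + MvPolynomial.C b * X 1 ^ 5
      + MvPolynomial.C c * (X 0 + X 1) ^ 5 : MvPolynomial (Fin 2) ℂ)) :
    ∃ a3' a4' a5' : ℂ,
      LinEquiv
        (MvPolynomial.C a * X 0 ^ 5 + MvPolynomial.C b * X 1 ^ 5
          + MvPolynomial.C c * (X 0 + X 1) ^ 5)
        (MvPolynomial.C a5' * X 0 ^ 5 + MvPolynomial.C (5 * a4') * X 0 ^ 4 * X 1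
          + MvPolynomial.C (10 * a3') * X 0 ^ 3 * X 1 ^ 2 + X 1 ^ 5) := by
  classical
  -- Step 1: a root of the Hessian sextic
  obtain ⟨t, HZ⟩ : ∃ t : ℂ, a*b*t^3 + c*(t+1)^3*(a*t^3+b) = 0 := by
    set p : Polynomial ℂ := Polynomial.C (a*c)*Polynomial.X^6 + Polynomial.C (3*a*c)*Polynomial.X^5
      + Polynomial.C (3*a*c)*Polynomial.X^4 + Polynomial.C (a*b+a*c+b*c)*Polynomial.X^3
      + Polynomial.C (3*b*c)*Polynomial.X^2 + Polynomial.C (3*b*c)*Polynomial.X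
      + Polynomial.C (b*c) with hp
    have hco : p.coeff 6 = a*c := by
      simp [hp, Polynomial.coeff_add, Polynomial.coeff_C_mul, Polynomial.coeff_X_pow,
        Polynomial.coeff_C, mul_assoc, Polynomial.coeff_mul_X_pow']
    have hdeg : 0 < p.degree := by
      have h6 : (6 : WithBot ℕ) ≤ p.degree :=
        Polynomial.le_degree_of_ne_zero (by rw [hco]; exact mul_ne_zero ha hc)
      exact lt_of_lt_of_le (by norm_num) h6
    obtain ⟨t, ht⟩ := Complex.exists_root hdeg
    refine ⟨t, ?_⟩
    rw [Polynomial.IsRoot, hp] at ht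
    simp only [Polynomial.eval_add, Polynomial.eval_mul, Polynomial.eval_pow, Polynomial.eval_C,
      Polynomial.eval_X] at ht
    linear_combination ht
  -- Step 2: Q does not vanish at (t, 1)  (else double root, contradicting squarefreeness)
  have hq : a*t^5 + b + c*(t+1)^5 ≠ 0 := by
    intro h0
    have hd2 : (a*t^4 + c*(t+1)^4)^2 = 0 := by
      linear_combination (a*t^3+c*(t+1)^3)*h0 - HZ
    have hd1 : a*t^4 + c*(t+1)^4 = 0 := by
      exact pow_eq_zero_iff (two_ne_zero) |>.mp hd2
    have h0C : (MvPolynomial.C a * MvPolynomial.C t^5 + MvPolynomial.C b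
        + MvPolynomial.C c*(MvPolynomial.C t + 1)^5 : MvPolynomial (Fin 2) ℂ) = 0 := by
      have := congrArg (fun x : ℂ => (MvPolynomial.C x : MvPolynomial (Fin 2) ℂ)) h0
      simpa only [map_add, map_mul, map_pow, map_one, map_zero] using this
    have h1C : (MvPolynomial.C a * MvPolynomial.C t^4
        + MvPolynomial.C c*(MvPolynomial.C t + 1)^4 : MvPolynomial (Fin 2) ℂ) = 0 := by
      have := congrArg (fun x : ℂ => (MvPolynomial.C x : MvPolynomial (Fin 2) ℂ)) hd1
      simpa only [map_add, map_mul, map_pow, map_one, map_zero] using this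
    have hdvd : (X 0 - MvPolynomial.C t * X 1) * (X 0 - MvPolynomial.C t * X 1) ∣
        (MvPolynomial.C a * X 0 ^ 5 + MvPolynomial.C b * X 1 ^ 5
          + MvPolynomial.C c * (X 0 + X 1) ^ 5 : MvPolynomial (Fin 2) ℂ) := by
      refine ⟨(10*MvPolynomial.C a*MvPolynomial.C t^3 + 10*MvPolynomial.C c*(MvPolynomial.C t+1)^3) * X 1^3
        + (10*MvPolynomial.C a*MvPolynomial.C t^2 + 10*MvPolynomial.C c*(MvPolynomial.C t+1)^2) * (X 0 - MvPolynomial.C t*X 1) * X 1^2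
        + (5*MvPolynomial.C a*MvPolynomial.C t + 5*MvPolynomial.C c*(MvPolynomial.C t+1)) * (X 0 - MvPolynomial.C t * X 1)^2 * X 1
        + (MvPolynomial.C a + MvPolynomial.C c) * (X 0 - MvPolynomial.C t*X 1)^3, ?_⟩
      linear_combination (X 1^5 : MvPolynomial (Fin 2) ℂ) * h0C
        + 5*(X 0 - MvPolynomial.C t*X 1)*X 1^4*h1C
    exact not_unit_lin t (hsf _ hdvd)
  -- Step 3: the determinant factor is nonzero
  have hd : a*t^4 + c*(t+1)^4 ≠ 0 := by
    intro hd0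
    have he : (a*t^5+b+c*(t+1)^5)*(a*t^3+c*(t+1)^3) = 0 := by
      linear_combination HZ + (a*t^4+c*(t+1)^4)*hd0
    have e0 : a*t^3+c*(t+1)^3 = 0 := (mul_eq_zero.mp he).resolve_left hq
    have ht6 : a^2*t^6 = 0 := by linear_combination (a*t^3+b)*e0 - HZ
    have ht0 : t = 0 := by
      have h6 : t^6 = 0 := (mul_eq_zero.mp ht6).resolve_left (pow_ne_zero 2 ha)
      exact pow_eq_zero_iff (by norm_num) |>.mp h6
    rw [ht0] at e0
    norm_num at e0
    exact hc e0
  -- Step 4: the scaling factor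
  obtain ⟨l, hl⟩ := IsAlgClosed.exists_pow_nat_eq ((a*t^5+b+c*(t+1)^5)⁻¹) (n := 5) (by norm_num)
  have hl0 : l ≠ 0 := by
    intro h
    rw [h] at hl
    simp only [ne_eq, zero_pow, OfNat.ofNat_ne_zero, not_false_eq_true] at hl
    exact hq (inv_eq_zero.mp hl.symm)
  have hl5q : l^5 * (a*t^5+b+c*(t+1)^5) = 1 := by rw [hl]; exact inv_mul_cancel₀ hq
  -- Step 5: data
  refine ⟨a*(c*(t+1)^3)^3*(l*t)^2 + b*(-(a*t^3+c*(t+1)^3))^3*l^2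
      + c*(c*(t+1)^3 + -(a*t^3+c*(t+1)^3))^3*(l*t+l)^2,
    a*(c*(t+1)^3)^4*(l*t) + b*(-(a*t^3+c*(t+1)^3))^4*l
      + c*(c*(t+1)^3 + -(a*t^3+c*(t+1)^3))^4*(l*t+l),
    a*(c*(t+1)^3)^5 + b*(-(a*t^3+c*(t+1)^3))^5 + c*(c*(t+1)^3 + -(a*t^3+c*(t+1)^3))^5,
    !![c*(t+1)^3, l*t; -(a*t^3+c*(t+1)^3), l], ?_, ?_⟩
  · rw [Matrix.det_fin_two_of, isUnit_iff_ne_zero]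
    have hdet : c*(t+1)^3 * l - l*t*(-(a*t^3+c*(t+1)^3)) = l*(a*t^4+c*(t+1)^4) := by ring
    rw [hdet]
    exact mul_ne_zero hl0 hd
  · -- main identity
    have hEs : a*(c*(t+1)^3)^2*(l*t)^3 + b*(-(a*t^3+c*(t+1)^3))^2*l^3
        + c*(c*(t+1)^3 + -(a*t^3+c*(t+1)^3))^2*(l*t+l)^3 = 0 := by
      linear_combination (l^3*(a*t^3+c*(t+1)^3)) * HZ
    have hFs : a*(c*(t+1)^3)*(l*t)^4 + b*(-(a*t^3+c*(t+1)^3))*l^4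
        + c*(c*(t+1)^3 + -(a*t^3+c*(t+1)^3))*(l*t+l)^4 = 0 := by
      linear_combination (-l^4) * HZ
    have hGs : a*(l*t)^5 + b*l^5 + c*(l*t+l)^5 = 1 := by
      linear_combination hl5q
    have hEC := congrArg (fun x : ℂ => (MvPolynomial.C x : MvPolynomial (Fin 2) ℂ)) hEs
    have hFC := congrArg (fun x : ℂ => (MvPolynomial.C x : MvPolynomial (Fin 2) ℂ)) hFs
    have hGC := congrArg (fun x : ℂ => (MvPolynomial.C x : MvPolynomial (Fin 2) ℂ)) hGs
    simp only [map_add, map_mul, map_pow, map_one, map_zero, map_neg] at hEC hFC hGC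
    simp only [substMat, map_add, map_mul, map_pow, map_neg, map_one, map_ofNat, aeval_X, aeval_C,
      MvPolynomial.algebraMap_eq, Matrix.cons_val', Matrix.cons_val_zero, Matrix.cons_val_one,
      Matrix.head_cons, Matrix.empty_val', Matrix.cons_val_fin_one, Matrix.head_fin_const,
      Matrix.of_apply]
    linear_combination (10 : MvPolynomial (Fin 2) ℂ)*hEC*(X 0)^2*(X 1)^3
      + 5*hFC*(X 0)*(X 1)^4 + hGC*(X 1)^5
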